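/- Let (M,d) be a compact metric space, X ⊂ M compact with at least two points, g : M → X measurable with d(x,g(x)) ≤ ε for all x ∈ M. Then the normalization constants satisfy |ν_{(M,d)} − ν_{(X,d)}| ≤ ε, where ν denotes the supremum over Borel probability measures of the square root of the Fréchet variance. -/

import Mathlib

/-!
Both inequalities `ν_M ≤ ν_X + ε` and `ν_X ≤ ν_M + ε` come from transporting measures. Push a
measure `μ` on `M` forward along `g`: for every centre `β ∈ X` the pointwise bound
`d(x, β) ≤ d(g x, β) + ε` and Minkowski's inequality in `L²(μ)` give
`V(μ) ≤ (∫ d(x, β)² dμ)^{1/2} ≤ (∫ d(g x, β)² dμ)^{1/2} + ε`, so `V(μ) ≤ V(g_* μ) + ε`.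
Conversely, push a measure on `X` forward along the inclusion and compare a centre `α ∈ M` with
`g α ∈ X`.
-/

open MeasureTheory

/-- Minkowski's inequality `‖f‖₂ ≤ ‖h + c‖₂ ≤ ‖h‖₂ + c`; its second step rests on `∫ h ≤ ‖h‖₂`,
the nonnegativity of the variance. -/
theorem sqrt_integral_sq_le_add {Ω : Type*} [MeasurableSpace Ω] {μ : Measure Ω}
    [IsProbabilityMeasure μ] {f h : Ω → ℝ} {c : ℝ} (hh : MemLp h 2 μ) (hf : 0 ≤ f) (hc : 0 ≤ c)
    (hfh : ∀ x, f x ≤ h x + c) :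
    √(∫ x, f x ^ 2 ∂μ) ≤ √(∫ x, h x ^ 2 ∂μ) + c := by
  have hh1 : Integrable h μ := hh.integrable one_le_two
  have hh2 : Integrable (fun x => h x ^ 2) μ := hh.integrable_sq
  have hlin : Integrable (fun x => 2 * c * h x + c ^ 2) μ :=
    (hh1.const_mul _).add (integrable_const _)
  have hexpand : (fun x => (h x + c) ^ 2) = fun x => h x ^ 2 + (2 * c * h x + c ^ 2) := by
    ext x; ring
  have hmean : ∫ x, h x ∂μ ≤ √(∫ x, h x ^ 2 ∂μ) := by
    refine Real.le_sqrt_of_sq_le ?_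
    have := ProbabilityTheory.variance_nonneg h μ
    rw [ProbabilityTheory.variance_eq_sub hh] at this
    simpa using this
  have hshift : ∫ x, (h x + c) ^ 2 ∂μ = ∫ x, h x ^ 2 ∂μ + 2 * c * ∫ x, h x ∂μ + c ^ 2 := by
    rw [hexpand, integral_add hh2 hlin, integral_add (hh1.const_mul _) (integrable_const _),
      integral_const_mul, integral_const, probReal_univ, one_smul, add_assoc]
  have hsq : ∫ x, f x ^ 2 ∂μ ≤ ∫ x, (h x + c) ^ 2 ∂μ :=
    integral_mono_of_nonneg (.of_forall fun x => sq_nonneg _) (hexpand ▸ hh2.add hlin)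
      (.of_forall fun x => pow_le_pow_left₀ (hf x) (hfh x) 2)
  refine Real.sqrt_le_iff.mpr ⟨by positivity, hsq.trans ?_⟩
  rw [hshift]
  nlinarith [Real.sq_sqrt (integral_nonneg fun x => sq_nonneg (h x) : 0 ≤ ∫ x, h x ^ 2 ∂μ)]

theorem dist_le_diam_univ {Z : Type*} [PseudoMetricSpace Z] [BoundedSpace Z] (x y : Z) :
    dist x y ≤ Metric.diam (Set.univ : Set Z) :=
  Metric.dist_le_diam_of_mem BoundedSpace.bounded_univ trivial trivial

noncomputable def rmsDist {Y : Type*} [PseudoMetricSpace Y] [MeasurableSpace Y] (μ : Measure Y)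
    (α : Y) : ℝ :=
  √(∫ x, dist x α ^ 2 ∂μ)

/-- `frechetDeviation μ` is the paper's `V(μ)`, and `normConst Y` its `ν_(Y,d)`. -/
noncomputable def frechetDeviation {Y : Type*} [PseudoMetricSpace Y] [MeasurableSpace Y]
    (μ : Measure Y) : ℝ :=
  ⨅ α, rmsDist μ α

noncomputable def normConst (Y : Type*) [PseudoMetricSpace Y] [MeasurableSpace Y] : ℝ :=
  ⨆ μ : ProbabilityMeasure Y, frechetDeviation (μ : Measure Y)

section

variable {Y Z : Type*} [MeasurableSpace Y] [PseudoMetricSpace Z] [MeasurableSpace Z]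

theorem rmsDist_map [OpensMeasurableSpace Z] (μ : Measure Y) {p : Y → Z} (hp : Measurable p)
    (β : Z) : rmsDist (μ.map p) β = √(∫ y, dist (p y) β ^ 2 ∂μ) := by
  rw [rmsDist, integral_map hp.aemeasurable (by fun_prop)]

theorem memLp_dist_comp [OpensMeasurableSpace Z] [BoundedSpace Z] (μ : Measure Y)
    [IsFiniteMeasure μ] {p : Y → Z} (hp : Measurable p) (β : Z) (q : ENNReal) :
    MemLp (fun y => dist (p y) β) q μ :=
  .of_bound ((continuous_id.dist continuous_const).measurable.comp hp).aestronglyMeasurable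
    (Metric.diam (Set.univ : Set Z)) <| .of_forall fun y => by
      rw [Real.norm_of_nonneg dist_nonneg]
      exact dist_le_diam_univ _ _

end

section

variable {Z : Type*} [PseudoMetricSpace Z] [MeasurableSpace Z]

theorem frechetDeviation_le_rmsDist (μ : Measure Z) (α : Z) :
    frechetDeviation μ ≤ rmsDist μ α :=
  ciInf_le ⟨0, by rintro _ ⟨β, rfl⟩; exact Real.sqrt_nonneg _⟩ α

theorem frechetDeviation_le_diam [BoundedSpace Z] (μ : Measure Z) [IsProbabilityMeasure μ] :
    frechetDeviation μ ≤ Metric.diam (Set.univ : Set Z) := by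
  obtain ⟨β⟩ := nonempty_of_isProbabilityMeasure μ
  refine (frechetDeviation_le_rmsDist μ β).trans ?_
  simpa [rmsDist] using sqrt_integral_sq_le_add (f := fun x => dist x β) (memLp_const 0)
    (fun _ => dist_nonneg) Metric.diam_nonneg fun x => by simpa using dist_le_diam_univ x β

theorem bddAbove_range_frechetDeviation [BoundedSpace Z] :
    BddAbove (Set.range fun μ : ProbabilityMeasure Z => frechetDeviation (μ : Measure Z)) := by
  refine ⟨Metric.diam (Set.univ : Set Z), ?_⟩
  rintro _ ⟨μ, rfl⟩
  exact frechetDeviation_le_diam (μ : Measure Z)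

end

theorem normConst_le_normConst_add {Y Z : Type*} [PseudoMetricSpace Y] [MeasurableSpace Y]
    [Nonempty Y] [PseudoMetricSpace Z] [MeasurableSpace Z] [OpensMeasurableSpace Z]
    [BoundedSpace Z] {p : Y → Z} (hp : Measurable p) (q : Z → Y) {ε : ℝ}
    (hpq : ∀ y β, dist y (q β) ≤ dist (p y) β + ε) : normConst Y ≤ normConst Z + ε := by
  obtain ⟨y₀⟩ := ‹Nonempty Y›
  have : Nonempty Z := ⟨p y₀⟩
  have : Nonempty (ProbabilityMeasure Y) := ⟨⟨Measure.dirac y₀, inferInstance⟩⟩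
  have hε : 0 ≤ ε := by simpa using dist_nonneg.trans (hpq y₀ (p y₀))
  refine ciSup_le fun μ => ?_
  have hpush : frechetDeviation (μ : Measure Y) - ε ≤ frechetDeviation ((μ : Measure Y).map p) :=
    le_ciInf fun β => by
      rw [sub_le_iff_le_add, rmsDist_map _ hp]
      exact (frechetDeviation_le_rmsDist _ (q β)).trans <| sqrt_integral_sq_le_add
        (memLp_dist_comp _ hp β 2) (fun _ => dist_nonneg) hε (hpq · β)
  have hsup : frechetDeviation ((μ : Measure Y).map p) ≤ normConst Z := by
    rw [← ProbabilityMeasure.toMeasure_map μ hp.aemeasurable]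
    exact le_ciSup bddAbove_range_frechetDeviation _
  linarith

theorem norm_const_approximation_general {M : Type*} [MetricSpace M] [CompactSpace M]
    [MeasurableSpace M] [BorelSpace M]
    (X : Set M) (hX2 : ∃ x y : X, x ≠ y)
    (g : M → X) (hg : Measurable g) (ε : ℝ) (hgd : ∀ x : M, dist x (g x : M) ≤ ε) :
    |(⨆ μ : ProbabilityMeasure M,
        ⨅ α : M, Real.sqrt (∫ x, dist x α ^ 2 ∂(μ : Measure M)))
      - (⨆ μ : ProbabilityMeasure X,
        ⨅ α : X, Real.sqrt (∫ y, dist y α ^ 2 ∂(μ : Measure X)))| ≤ ε := by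
  obtain ⟨x₀, -, -⟩ := hX2
  have : Nonempty X := ⟨x₀⟩
  have : Nonempty M := ⟨x₀⟩
  change |normConst M - normConst X| ≤ ε
  have hMX : normConst M ≤ normConst X + ε :=
    normConst_le_normConst_add hg Subtype.val fun x β => by
      rw [Subtype.dist_eq]
      linarith [dist_triangle x (g x) β, hgd x]
  have hXM : normConst X ≤ normConst M + ε :=
    normConst_le_normConst_add measurable_subtype_coe g fun y α => by
      rw [Subtype.dist_eq]
      linarith [dist_triangle (y : M) α (g α), dist_comm α (g α), hgd α]
  exact abs_sub_le_iff.mpr ⟨by linarith, by linarith⟩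

/-- The synchrony normalization constants of M and of a compact subset X (with at least
two points, and every x ∈ M within ε of g(x) ∈ X) differ by at most ε. -/
theorem norm_const_approximation {M : Type*} [MetricSpace M] [CompactSpace M]
    [MeasurableSpace M] [BorelSpace M]
    (X : Set M) (hX : IsCompact X) (hX2 : ∃ x y : X, x ≠ y)
    (g : M → X) (hg : Measurable g) (ε : ℝ) (hgd : ∀ x : M, dist x (g x : M) ≤ ε) :
    |(⨆ μ : ProbabilityMeasure M,
        ⨅ α : M, Real.sqrt (∫ x, dist x α ^ 2 ∂(μ : Measure M)))
      - (⨆ μ : ProbabilityMeasure X,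
        ⨅ α : X, Real.sqrt (∫ y, dist y α ^ 2 ∂(μ : Measure X)))| ≤ ε :=
  norm_const_approximation_general X hX2 g hg ε hgd
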